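/- arXiv:2005.03180 — 3 statements merged into one kernel-verified Lean document; each statement's English description precedes it below -/
import Mathlib

section
/- Let H be a separable real Hilbert space and ν a probability measure with E‖u‖⁴ < ∞. Let V_{d,N} be the PCA subspace spanned by the top d empirical eigenvectors from N ≥ d i.i.d. samples, and V_d the span of the top d eigenvectors of the true covariance C. Then there is a constant Q ≥ 0 depending only on ν such that E_{samples}[R(V_{d,N})] ≤ √(Qd/N) + R(V_d), where R(V) = E_{u∼ν}‖u − Π_V u‖². -/
/-!
For an orthonormal family `χ`, the projection error is `R(span χ) = E‖u‖² - ∑ j, ⟪χ j, C χ j⟫`,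
so comparing `V_{d,N}` with `V_d` amounts to comparing partial traces of `C`. Since `ψ` maximises
the partial trace of `C_N`, the gap `tr_φ C - tr_ψ C` is at most `tr_φ (C - C_N) + tr_ψ (C_N - C)`,
and by Cauchy–Schwarz each term is at most `√d ‖C - C_N‖_HS`. In the Hilbert basis `φ` the entry
`⟪φ m, (C - C_N) φ i⟫` is the deviation of an empirical mean of `⟪φ m, u⟫ ⟪φ i, u⟫` from its
expectation, so its second moment is at most `E[⟪φ m, u⟫² ⟪φ i, u⟫²] / N`. Summing over `i, m`
gives `E ‖C - C_N‖²_HS ≤ E‖u‖⁴ / N`, and Jensen's inequality for `√·` yields `Q = 4 E‖u‖⁴`.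
-/

open MeasureTheory
open scoped RealInnerProductSpace BigOperators

/-- The rank-one operator `u ⊗ u : v ↦ ⟪u, v⟫ • u`. -/
noncomputable def rankOne {H : Type*} [NormedAddCommGroup H] [InnerProductSpace ℝ H]
    (u : H) : H →L[ℝ] H :=
  (innerSL ℝ u).smulRight u

open ProbabilityTheory
open scoped ENNReal

section Operators

variable {H : Type*} [NormedAddCommGroup H] [InnerProductSpace ℝ H]

noncomputable def empiricalCov {N : ℕ} (u : Fin N → H) : H →L[ℝ] H :=
  (N : ℝ)⁻¹ • ∑ k, rankOne (u k)

lemma inner_empiricalCov_apply {N : ℕ} (u : Fin N → H) (x z : H) :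
    ⟪x, empiricalCov u z⟫ = (N : ℝ)⁻¹ * ∑ k, ⟪x, u k⟫ * ⟪z, u k⟫ := by
  simp only [empiricalCov, rankOne, smul_apply, sum_apply, ContinuousLinearMap.smulRight_apply,
    innerSL_apply_apply, real_inner_smul_right, inner_sum]
  simp only [real_inner_comm z, mul_comm]

lemma isSymmetric_of_inner_apply_comm {T : H →L[ℝ] H} (hT : ∀ x z, ⟪x, T z⟫ = ⟪z, T x⟫) :
    (T : H →ₗ[ℝ] H).IsSymmetric := fun x z => by
  rw [ContinuousLinearMap.coe_coe, real_inner_comm, hT]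

lemma isSymmetric_empiricalCov {N : ℕ} (u : Fin N → H) :
    (empiricalCov u : H →ₗ[ℝ] H).IsSymmetric :=
  isSymmetric_of_inner_apply_comm fun x z => by simp_rw [inner_empiricalCov_apply, mul_comm]

lemma norm_sub_sum_inner_smul_sq {κ : Type*} {s : Finset κ} {χ : κ → H} (hχ : Orthonormal ℝ χ)
    (v : H) : ‖v - ∑ j ∈ s, ⟪χ j, v⟫ • χ j‖ ^ 2 = ‖v‖ ^ 2 - ∑ j ∈ s, ⟪χ j, v⟫ ^ 2 := by
  have hproj : ⟪v, ∑ j ∈ s, ⟪χ j, v⟫ • χ j⟫ = ∑ j ∈ s, ⟪χ j, v⟫ ^ 2 := by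
    simp only [inner_sum, real_inner_smul_right, real_inner_comm v, sq]
  rw [@norm_sub_sq ℝ, ← real_inner_self_eq_norm_sq (∑ j ∈ s, _), hχ.inner_sum, hproj]
  simp only [RCLike.re_to_real, conj_trivial, sq]
  ring

lemma norm_inner_mul_inner_le (x z v : H) : ‖⟪x, v⟫ * ⟪z, v⟫‖ ≤ ‖x‖ * ‖z‖ * ‖v‖ ^ 2 := by
  rw [norm_mul, sq, mul_mul_mul_comm]
  exact mul_le_mul (norm_inner_le_norm x v) (norm_inner_le_norm z v) (norm_nonneg _)
    (by positivity)

lemma Orthonormal.sum_enorm_inner_sq_le {κ : Type*} {s : Finset κ} {χ : κ → H}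
    (hχ : Orthonormal ℝ χ) (x : H) : ∑ j ∈ s, ‖⟪χ j, x⟫‖ₑ ^ 2 ≤ ‖x‖ₑ ^ 2 := by
  simp only [← ofReal_norm, ← ENNReal.ofReal_pow (norm_nonneg _)]
  rw [← ENNReal.ofReal_sum_of_nonneg fun _ _ => by positivity]
  exact ENNReal.ofReal_le_ofReal (hχ.sum_inner_products_le x)

variable {ι : Type*} (b : HilbertBasis ι ℝ H)

lemma HilbertBasis.enorm_sq_eq_tsum (x : H) : ‖x‖ₑ ^ 2 = ∑' i, ‖⟪b i, x⟫‖ₑ ^ 2 := by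
  have h : HasSum (fun i => ‖⟪b i, x⟫‖ ^ 2) (‖x‖ ^ 2) := by
    have h := b.hasSum_inner_mul_inner x x
    rw [real_inner_self_eq_norm_sq] at h
    refine h.congr_fun fun i => ?_
    rw [Real.norm_eq_abs, sq_abs, sq, real_inner_comm x]
  simp only [← ofReal_norm, ← ENNReal.ofReal_pow (norm_nonneg _)]
  rw [← ENNReal.ofReal_tsum_of_nonneg (fun _ => by positivity) h.summable, h.tsum_eq]

lemma HilbertBasis.tsum_tsum_enorm_inner_mul_inner_sq (v : H) :
    ∑' i, ∑' m, ‖⟪b m, v⟫ * ⟪b i, v⟫‖ₑ ^ 2 = ‖v‖ₑ ^ 4 := by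
  simp_rw [enorm_mul, mul_pow, ENNReal.tsum_mul_right, ENNReal.tsum_mul_left,
    ← b.enorm_sq_eq_tsum]
  ring

/-- The squared Hilbert–Schmidt norm, valued in `ℝ≥0∞` so that no summability side conditions
arise. -/
noncomputable def hilbertSchmidtNormSq (T : H →L[ℝ] H) : ℝ≥0∞ := ∑' i, ‖T (b i)‖ₑ ^ 2

lemma hilbertSchmidtNormSq_eq_tsum_tsum (T : H →L[ℝ] H) :
    hilbertSchmidtNormSq b T = ∑' i, ∑' m, ‖⟪b m, T (b i)⟫‖ₑ ^ 2 :=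
  tsum_congr fun _ => b.enorm_sq_eq_tsum _

lemma hilbertSchmidtNormSq_neg (T : H →L[ℝ] H) :
    hilbertSchmidtNormSq b (-T) = hilbertSchmidtNormSq b T := by
  simp [hilbertSchmidtNormSq]

lemma sum_enorm_apply_sq_le_hilbertSchmidtNormSq {T : H →L[ℝ] H}
    (hT : (T : H →ₗ[ℝ] H).IsSymmetric) {κ : Type*} {s : Finset κ} {χ : κ → H}
    (hχ : Orthonormal ℝ χ) : ∑ j ∈ s, ‖T (χ j)‖ₑ ^ 2 ≤ hilbertSchmidtNormSq b T := calc
  ∑ j ∈ s, ‖T (χ j)‖ₑ ^ 2 = ∑' i, ∑ j ∈ s, ‖⟪χ j, T (b i)⟫‖ₑ ^ 2 := by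
    rw [Summable.tsum_finsetSum fun _ _ => ENNReal.summable]
    refine Finset.sum_congr rfl fun j _ => ?_
    rw [b.enorm_sq_eq_tsum]
    refine tsum_congr fun i => ?_
    rw [← ContinuousLinearMap.coe_coe T, ← hT, real_inner_comm]
  _ ≤ hilbertSchmidtNormSq b T := ENNReal.tsum_le_tsum fun _ => hχ.sum_enorm_inner_sq_le _

variable {κ : Type*} [Fintype κ]

lemma ofReal_sum_inner_apply_le_rpow_card_mul_hilbertSchmidtNormSq {T : H →L[ℝ] H}
    (hT : (T : H →ₗ[ℝ] H).IsSymmetric) {χ : κ → H} (hχ : Orthonormal ℝ χ) :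
    ENNReal.ofReal (∑ j, ⟪T (χ j), χ j⟫)
      ≤ (Fintype.card κ * hilbertSchmidtNormSq b T) ^ (1 / 2 : ℝ) := calc
  ENNReal.ofReal (∑ j, ⟪T (χ j), χ j⟫) ≤ ENNReal.ofReal (∑ j, ‖T (χ j)‖) := by
    refine ENNReal.ofReal_le_ofReal (Finset.sum_le_sum fun j _ => ?_)
    simpa [hχ.1 j] using real_inner_le_norm (T (χ j)) (χ j)
  _ = ∑ j, 1 * ‖T (χ j)‖ₑ := by
    simp [ENNReal.ofReal_sum_of_nonneg, ofReal_norm]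
  _ ≤ (∑ _j : κ, 1 ^ (2 : ℝ)) ^ (1 / 2 : ℝ) * (∑ j, ‖T (χ j)‖ₑ ^ (2 : ℝ)) ^ (1 / 2 : ℝ) :=
    ENNReal.inner_le_Lp_mul_Lq _ _ _ Real.HolderConjugate.two_two
  _ ≤ (Fintype.card κ * hilbertSchmidtNormSq b T) ^ (1 / 2 : ℝ) := by
    rw [← ENNReal.mul_rpow_of_nonneg _ _ (by norm_num)]
    simp only [ENNReal.rpow_two, one_pow, Finset.sum_const, Finset.card_univ, nsmul_eq_mul,
      mul_one]
    gcongr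
    exact sum_enorm_apply_sq_le_hilbertSchmidtNormSq b hT hχ

lemma ofReal_sum_inner_apply_sub_sum_inner_apply_le {A C : H →L[ℝ] H}
    (hA : (A : H →ₗ[ℝ] H).IsSymmetric) (hC : (C : H →ₗ[ℝ] H).IsSymmetric)
    {χ ψ : κ → H} (hχ : Orthonormal ℝ χ) (hψ : Orthonormal ℝ ψ)
    (hopt : ∑ j, ⟪A (χ j), χ j⟫ ≤ ∑ j, ⟪A (ψ j), ψ j⟫) :
    ENNReal.ofReal (∑ j, ⟪C (χ j), χ j⟫ - ∑ j, ⟪C (ψ j), ψ j⟫)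
      ≤ (4 * Fintype.card κ * hilbertSchmidtNormSq b (C - A)) ^ (1 / 2 : ℝ) := by
  have hsplit : ∑ j, ⟪C (χ j), χ j⟫ - ∑ j, ⟪C (ψ j), ψ j⟫
      ≤ ∑ j, ⟪(C - A) (χ j), χ j⟫ + ∑ j, ⟪(A - C) (ψ j), ψ j⟫ := by
    simp only [sub_apply, inner_sub_left, Finset.sum_sub_distrib]
    linarith
  have hsqrt4 : (4 : ℝ≥0∞) ^ (1 / 2 : ℝ) = 2 := by
    rw [show (4 : ℝ≥0∞) = 2 ^ (2 : ℝ) by norm_num, ← ENNReal.rpow_mul]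
    norm_num
  calc ENNReal.ofReal (∑ j, ⟪C (χ j), χ j⟫ - ∑ j, ⟪C (ψ j), ψ j⟫)
      ≤ ENNReal.ofReal (∑ j, ⟪(C - A) (χ j), χ j⟫)
        + ENNReal.ofReal (∑ j, ⟪(A - C) (ψ j), ψ j⟫) :=
        (ENNReal.ofReal_le_ofReal hsplit).trans ENNReal.ofReal_add_le
    _ ≤ (Fintype.card κ * hilbertSchmidtNormSq b (C - A)) ^ (1 / 2 : ℝ)
        + (Fintype.card κ * hilbertSchmidtNormSq b (A - C)) ^ (1 / 2 : ℝ) :=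
        add_le_add
          (ofReal_sum_inner_apply_le_rpow_card_mul_hilbertSchmidtNormSq b (hC.sub hA) hχ)
          (ofReal_sum_inner_apply_le_rpow_card_mul_hilbertSchmidtNormSq b (hA.sub hC) hψ)
    _ = (4 * Fintype.card κ * hilbertSchmidtNormSq b (C - A)) ^ (1 / 2 : ℝ) := by
        rw [← neg_sub C A, hilbertSchmidtNormSq_neg, ← two_mul, mul_assoc,
          ENNReal.mul_rpow_of_nonneg 4 _ (by norm_num), hsqrt4]

end Operators

section Integration

variable {α : Type*} [MeasurableSpace α] {μ : Measure α}

lemma ofReal_integral_le_lintegral_ofReal {f : α → ℝ} (hf : ∀ a, 0 ≤ f a) :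
    ENNReal.ofReal (∫ a, f a ∂μ) ≤ ∫⁻ a, ENNReal.ofReal (f a) ∂μ := by
  simpa only [Real.enorm_of_nonneg (integral_nonneg hf), Real.enorm_of_nonneg (hf _)]
    using enorm_integral_le_lintegral_enorm f

variable [IsProbabilityMeasure μ]

lemma lintegral_rpow_le_rpow_lintegral {f : α → ℝ≥0∞} (hf : AEMeasurable f μ) {p : ℝ}
    (hp₀ : 0 < p) (hp₁ : p ≤ 1) : ∫⁻ a, f a ^ p ∂μ ≤ (∫⁻ a, f a ∂μ) ^ p := by
  have h := eLpNorm'_le_eLpNorm'_of_exponent_le one_pos ((one_le_div hp₀).2 hp₁) μ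
    (hf.pow_const p).aestronglyMeasurable
  simpa only [eLpNorm', enorm_eq_self, ENNReal.rpow_one, one_div, inv_one, inv_inv,
    ← ENNReal.rpow_mul, mul_inv_cancel₀ hp₀.ne'] using h

lemma integral_le_add_sqrt_of_ofReal_le_add_rpow {G : α → ℝ} (hG : ∀ a, 0 ≤ G a)
    {F : α → ℝ≥0∞} (hF : AEMeasurable F μ) {c B r : ℝ} (hc : 0 ≤ c) (hB : 0 ≤ B) (hr : 0 ≤ r)
    (hpoint : ∀ a, ENNReal.ofReal (G a) ≤ ENNReal.ofReal r + (ENNReal.ofReal c * F a) ^ (1 / 2 : ℝ))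
    (hmean : ∫⁻ a, F a ∂μ ≤ ENNReal.ofReal B) :
    ∫ a, G a ∂μ ≤ r + √(c * B) := by
  rw [← ENNReal.ofReal_le_ofReal_iff (by positivity)]
  calc ENNReal.ofReal (∫ a, G a ∂μ) ≤ ∫⁻ a, ENNReal.ofReal (G a) ∂μ :=
        ofReal_integral_le_lintegral_ofReal hG
    _ ≤ ∫⁻ a, ENNReal.ofReal r + (ENNReal.ofReal c * F a) ^ (1 / 2 : ℝ) ∂μ := lintegral_mono hpoint
    _ = ENNReal.ofReal r + ∫⁻ a, (ENNReal.ofReal c * F a) ^ (1 / 2 : ℝ) ∂μ := by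
        rw [lintegral_add_left measurable_const, lintegral_const, measure_univ, mul_one]
    _ ≤ ENNReal.ofReal r + (∫⁻ a, ENNReal.ofReal c * F a ∂μ) ^ (1 / 2 : ℝ) := by
        gcongr
        exact lintegral_rpow_le_rpow_lintegral (hF.const_mul _) (by norm_num) (by norm_num)
    _ ≤ ENNReal.ofReal r + (ENNReal.ofReal c * ENNReal.ofReal B) ^ (1 / 2 : ℝ) := by
        rw [lintegral_const_mul' _ _ ENNReal.ofReal_ne_top]
        gcongr
    _ = ENNReal.ofReal (r + √(c * B)) := by
        rw [← ENNReal.ofReal_mul hc, ENNReal.ofReal_rpow_of_nonneg (by positivity) (by norm_num),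
          ← Real.sqrt_eq_rpow, ENNReal.ofReal_add hr (Real.sqrt_nonneg _)]

end Integration

section EmpiricalMean

variable {Ω E : Type*} [MeasurableSpace Ω] [MeasurableSpace E] {P : Measure Ω}
  [IsProbabilityMeasure P] {ν : Measure E} [IsProbabilityMeasure ν] {N : ℕ} {u : Fin N → Ω → E}

lemma lintegral_enorm_integral_sub_empiricalMean_sq_le (hN : N ≠ 0)
    (hu : ∀ k, Measurable (u k)) (hind : iIndepFun u P) (hmap : ∀ k, P.map (u k) = ν)
    {g : E → ℝ} (hg : Measurable g) (hg2 : MemLp g 2 ν) :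
    ∫⁻ ω, ‖∫ v, g v ∂ν - (N : ℝ)⁻¹ * ∑ k, g (u k ω)‖ₑ ^ 2 ∂P
      ≤ (∫⁻ v, ‖g v‖ₑ ^ 2 ∂ν) / N := by
  have hX2 : ∀ k, MemLp (fun ω => g (u k ω)) 2 P := fun k =>
    ((hmap k).symm ▸ hg2).comp_of_map (hu k).aemeasurable
  have hXmean : ∀ k, ∫ ω, g (u k ω) ∂P = ∫ v, g v ∂ν := fun k => by
    rw [← hmap k, integral_map (hu k).aemeasurable hg.aestronglyMeasurable]
  have hXvar : ∀ k, Var[fun ω => g (u k ω); P] = Var[g; ν] := fun k => by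
    rw [← hmap k, variance_map hg.aemeasurable (hu k).aemeasurable]
    rfl
  set S : Ω → ℝ := fun ω => (N : ℝ)⁻¹ * ∑ k, g (u k ω) with hS
  have hS2 : MemLp S 2 P := (memLp_finsetSum _ fun k _ => hX2 k).const_mul _
  have hSmean : ∫ ω, S ω ∂P = ∫ v, g v ∂ν := by
    simp only [hS, integral_const_mul, hXmean, Finset.sum_const, Finset.card_univ,
      integral_finsetSum _ fun k _ => (hX2 k).integrable one_le_two, Fintype.card_fin,
      nsmul_eq_mul]
    field_simp
  have hSvar : Var[S; P] = Var[g; ν] / N := by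
    have hsum : Var[fun ω => ∑ k, g (u k ω); P] = N * Var[g; ν] := by
      rw [← Finset.sum_fn, IndepFun.variance_sum (fun k _ => hX2 k)
        fun k _ l _ hkl => (hind.indepFun hkl).comp hg hg]
      simp [hXvar]
    rw [hS, variance_const_mul, hsum]
    field_simp
  calc ∫⁻ ω, ‖∫ v, g v ∂ν - S ω‖ₑ ^ 2 ∂P = evariance S P := by
        simp_rw [evariance, hSmean, enorm_sub_rev]
    _ = ENNReal.ofReal (Var[g; ν] / N) := by rw [← hS2.ofReal_variance_eq, hSvar]
    _ ≤ ENNReal.ofReal ((∫ v, g v ^ 2 ∂ν) / N) := by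
        gcongr
        exact variance_le_expectation_sq hg.aestronglyMeasurable
    _ = (∫⁻ v, ‖g v‖ₑ ^ 2 ∂ν) / N := by
        rw [ENNReal.ofReal_div_of_pos (by positivity), ENNReal.ofReal_natCast,
          ofReal_integral_eq_lintegral_ofReal hg2.integrable_sq (.of_forall fun _ => sq_nonneg _)]
        simp_rw [← enorm_pow, Real.enorm_of_nonneg (sq_nonneg _)]

end EmpiricalMean

lemma memLp_norm_sq {E : Type*} [NormedAddCommGroup E] [MeasurableSpace E]
    [OpensMeasurableSpace E] {μ : Measure E} (h4 : Integrable (fun v : E => ‖v‖ ^ 4) μ) :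
    MemLp (fun v : E => ‖v‖ ^ 2) 2 μ :=
  (memLp_two_iff_integrable_sq (by fun_prop)).2 (by simpa [← pow_mul] using h4)

section Covariance

variable {H : Type*} [NormedAddCommGroup H] [InnerProductSpace ℝ H] [MeasurableSpace H]
  [BorelSpace H] {ν : Measure H} {C : H →L[ℝ] H}

lemma integrable_inner_mul_inner (h2 : Integrable (fun v : H => ‖v‖ ^ 2) ν) (x z : H) :
    Integrable (fun v => ⟪x, v⟫ * ⟪z, v⟫) ν :=
  (h2.const_mul (‖x‖ * ‖z‖)).mono' (by fun_prop)
    (.of_forall fun v => (norm_inner_mul_inner_le x z v).trans_eq (by ring))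

lemma memLp_inner_mul_inner (h4 : Integrable (fun v : H => ‖v‖ ^ 4) ν) (x z : H) :
    MemLp (fun v => ⟪x, v⟫ * ⟪z, v⟫) 2 ν :=
  ((memLp_norm_sq h4).const_mul (‖x‖ * ‖z‖)).of_le (by fun_prop)
    (.of_forall fun v => (norm_inner_mul_inner_le x z v).trans (le_abs_self _))

lemma integral_norm_sub_sum_inner_smul_sq (h2 : Integrable (fun v : H => ‖v‖ ^ 2) ν)
    (hC : ∀ x z : H, ⟪x, C z⟫ = ∫ v, ⟪x, v⟫ * ⟪z, v⟫ ∂ν) {κ : Type*} (s : Finset κ)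
    {χ : κ → H} (hχ : Orthonormal ℝ χ) :
    ∫ v, ‖v - ∑ j ∈ s, ⟪χ j, v⟫ • χ j‖ ^ 2 ∂ν = ∫ v, ‖v‖ ^ 2 ∂ν - ∑ j ∈ s, ⟪χ j, C (χ j)⟫ := by
  have hint : ∀ j ∈ s, Integrable (fun v => ⟪χ j, v⟫ * ⟪χ j, v⟫) ν := fun j _ =>
    integrable_inner_mul_inner h2 _ _
  simp_rw [norm_sub_sum_inner_smul_sq hχ, sq ⟪_, _⟫, hC]
  rw [integral_sub h2 (integrable_finsetSum _ hint), integral_finsetSum _ hint]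

lemma ofReal_integral_norm_sub_sum_inner_smul_sq_le {ι : Type*} (b : HilbertBasis ι ℝ H)
    (h2 : Integrable (fun v : H => ‖v‖ ^ 2) ν)
    (hC : ∀ x z : H, ⟪x, C z⟫ = ∫ v, ⟪x, v⟫ * ⟪z, v⟫ ∂ν) {A : H →L[ℝ] H}
    (hA : (A : H →ₗ[ℝ] H).IsSymmetric) {κ : Type*} [Fintype κ] {χ ψ : κ → H}
    (hχ : Orthonormal ℝ χ) (hψ : Orthonormal ℝ ψ)
    (hopt : ∑ j, ⟪A (χ j), χ j⟫ ≤ ∑ j, ⟪A (ψ j), ψ j⟫) :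
    ENNReal.ofReal (∫ v, ‖v - ∑ j, ⟪ψ j, v⟫ • ψ j‖ ^ 2 ∂ν)
      ≤ ENNReal.ofReal (∫ v, ‖v - ∑ j, ⟪χ j, v⟫ • χ j‖ ^ 2 ∂ν)
        + (4 * Fintype.card κ * hilbertSchmidtNormSq b (C - A)) ^ (1 / 2 : ℝ) := by
  have hCsymm : (C : H →ₗ[ℝ] H).IsSymmetric :=
    isSymmetric_of_inner_apply_comm fun x z => by simp_rw [hC, mul_comm]
  calc ENNReal.ofReal (∫ v, ‖v - ∑ j, ⟪ψ j, v⟫ • ψ j‖ ^ 2 ∂ν)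
      = ENNReal.ofReal (∫ v, ‖v - ∑ j, ⟪χ j, v⟫ • χ j‖ ^ 2 ∂ν
          + (∑ j, ⟪C (χ j), χ j⟫ - ∑ j, ⟪C (ψ j), ψ j⟫)) := by
        rw [integral_norm_sub_sum_inner_smul_sq h2 hC _ hψ,
          integral_norm_sub_sum_inner_smul_sq h2 hC _ hχ]
        simp only [real_inner_comm]
        ring_nf
    _ ≤ _ := ENNReal.ofReal_add_le.trans <| add_le_add_right
        (ofReal_sum_inner_apply_sub_sum_inner_apply_le b hA hCsymm hχ hψ hopt) _

end Covariance

section EmpiricalCovariance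

variable {H : Type*} [NormedAddCommGroup H] [InnerProductSpace ℝ H] [MeasurableSpace H]
  [BorelSpace H] {ι : Type*} [Countable ι] (b : HilbertBasis ι ℝ H) (C : H →L[ℝ] H)
  {Ω : Type*} [MeasurableSpace Ω] {N : ℕ} {u : Fin N → Ω → H}

lemma measurable_enorm_inner_sub_empiricalCov_apply_sq (hu : ∀ k, Measurable (u k)) (x z : H) :
    Measurable fun ω => ‖⟪x, (C - empiricalCov (u · ω)) z⟫‖ₑ ^ 2 := by
  simp_rw [sub_apply, inner_sub_right, inner_empiricalCov_apply]
  have := fun k => (show Measurable fun v : H => ⟪x, v⟫ * ⟪z, v⟫ by fun_prop).comp (hu k)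
  fun_prop

lemma measurable_hilbertSchmidtNormSq_sub_empiricalCov (hu : ∀ k, Measurable (u k)) :
    Measurable fun ω => hilbertSchmidtNormSq b (C - empiricalCov (u · ω)) := by
  simp_rw [hilbertSchmidtNormSq_eq_tsum_tsum]
  exact .tsum fun _ => .tsum fun _ => measurable_enorm_inner_sub_empiricalCov_apply_sq C hu _ _

lemma lintegral_hilbertSchmidtNormSq_sub_empiricalCov_le {ν : Measure H}
    [IsProbabilityMeasure ν] (hmom4 : Integrable (fun v : H => ‖v‖ ^ 4) ν)
    (hC : ∀ x z : H, ⟪x, C z⟫ = ∫ v, ⟪x, v⟫ * ⟪z, v⟫ ∂ν) {P : Measure Ω}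
    [IsProbabilityMeasure P] (hN : N ≠ 0) (hu : ∀ k, Measurable (u k)) (hind : iIndepFun u P)
    (hmap : ∀ k, P.map (u k) = ν) :
    ∫⁻ ω, hilbertSchmidtNormSq b (C - empiricalCov (u · ω)) ∂P
      ≤ ENNReal.ofReal ((∫ v, ‖v‖ ^ 4 ∂ν) / N) := by
  set g : ι → ι → H → ℝ := fun i m v => ⟪b m, v⟫ * ⟪b i, v⟫
  have hg : ∀ i m, Measurable (g i m) := fun i m => by fun_prop
  have hg2 : ∀ i m, Measurable fun v => ‖g i m v‖ₑ ^ 2 := fun i m => (hg i m).enorm.pow_const 2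
  have hentry : ∀ ω i m, ⟪b m, (C - empiricalCov (u · ω)) (b i)⟫
      = ∫ v, g i m v ∂ν - (N : ℝ)⁻¹ * ∑ k, g i m (u k ω) := fun ω i m => by
    rw [sub_apply, inner_sub_right, hC, inner_empiricalCov_apply]
  have hentry_meas := measurable_enorm_inner_sub_empiricalCov_apply_sq C hu
  calc ∫⁻ ω, hilbertSchmidtNormSq b (C - empiricalCov (u · ω)) ∂P
      = ∑' i, ∑' m, ∫⁻ ω, ‖⟪b m, (C - empiricalCov (u · ω)) (b i)⟫‖ₑ ^ 2 ∂P := by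
        simp_rw [hilbertSchmidtNormSq_eq_tsum_tsum]
        rw [lintegral_tsum fun i => (Measurable.tsum fun m => hentry_meas _ _).aemeasurable]
        exact tsum_congr fun i => lintegral_tsum fun m => (hentry_meas _ _).aemeasurable
    _ ≤ ∑' i, ∑' m, (∫⁻ v, ‖g i m v‖ₑ ^ 2 ∂ν) / N := by
        gcongr with i m
        simp_rw [hentry]
        exact lintegral_enorm_integral_sub_empiricalMean_sq_le hN hu hind hmap (hg i m)
          (memLp_inner_mul_inner hmom4 _ _)
    _ = (∫⁻ v, ∑' i, ∑' m, ‖g i m v‖ₑ ^ 2 ∂ν) / N := by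
        simp_rw [div_eq_mul_inv, ENNReal.tsum_mul_right]
        rw [lintegral_tsum fun i => (Measurable.tsum fun m => hg2 i m).aemeasurable]
        exact congrArg (· * _) <| tsum_congr fun i =>
          (lintegral_tsum fun m => (hg2 i m).aemeasurable).symm
    _ = ENNReal.ofReal ((∫ v, ‖v‖ ^ 4 ∂ν) / N) := by
        simp_rw [g, b.tsum_tsum_enorm_inner_mul_inner_sq]
        rw [ENNReal.ofReal_div_of_pos (by positivity), ENNReal.ofReal_natCast,
          ofReal_integral_eq_lintegral_ofReal hmom4 (.of_forall fun _ => by positivity)]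
        simp_rw [← ofReal_norm, ENNReal.ofReal_pow (norm_nonneg _)]

end EmpiricalCovariance

theorem pca_generalization_bound_general
    {H : Type*} [NormedAddCommGroup H] [InnerProductSpace ℝ H] [CompleteSpace H]
    [MeasurableSpace H] [BorelSpace H]
    (ν : Measure H) [IsProbabilityMeasure ν]
    (hmom4 : Integrable (fun u : H => ‖u‖ ^ 4) ν)
    (C : H →L[ℝ] H)
    (hC : ∀ v z : H, ⟪v, C z⟫ = ∫ u, ⟪v, u⟫ * ⟪z, u⟫ ∂ν)
    (φ : ℕ → H) (hφ : Orthonormal ℝ φ)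
    (hspan : (Submodule.span ℝ (Set.range φ)).topologicalClosure = ⊤) :
    ∃ Q : ℝ, 0 ≤ Q ∧
      ∀ (d N : ℕ), 1 ≤ d → d ≤ N →
      ∀ (Ω : Type) (_ : MeasurableSpace Ω) (P : Measure Ω), IsProbabilityMeasure P →
      ∀ (u : Fin N → Ω → H), (∀ j, Measurable (u j)) →
        ProbabilityTheory.iIndepFun u P →
        (∀ j, P.map (u j) = ν) →
      ∀ (ψ : Fin d → Ω → H) (mu : Fin d → Ω → ℝ),
        (∀ ω, Orthonormal ℝ (fun j => ψ j ω)) →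
        (∀ ω j, ((N : ℝ)⁻¹ • ∑ k, rankOne (u k ω)) (ψ j ω) = mu j ω • ψ j ω) →
        (∀ ω (χ : Fin d → H), Orthonormal ℝ χ →
          (∑ j, ⟪((N : ℝ)⁻¹ • ∑ k, rankOne (u k ω)) (χ j), χ j⟫)
            ≤ ∑ j, ⟪((N : ℝ)⁻¹ • ∑ k, rankOne (u k ω)) (ψ j ω), ψ j ω⟫) →
        (∫ ω, ∫ v, ‖v - ∑ j : Fin d, ⟪ψ j ω, v⟫ • ψ j ω‖ ^ 2 ∂ν ∂P)
          ≤ Real.sqrt (Q * d / N)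
            + ∫ v, ‖v - ∑ j ∈ Finset.range d, ⟪φ j, v⟫ • φ j‖ ^ 2 ∂ν := by
  refine ⟨4 * ∫ v, ‖v‖ ^ 4 ∂ν, by positivity, ?_⟩
  intro d N hd hdN Ω _ P _ u hu hind hmap ψ _ hψ _ hopt
  have h2 : Integrable (fun v : H => ‖v‖ ^ 2) ν := (memLp_norm_sq hmom4).integrable one_le_two
  let b := HilbertBasis.mk hφ hspan.ge
  have hφd : Orthonormal ℝ fun j : Fin d => φ j := hφ.comp _ Fin.val_injective
  have hpoint : ∀ ω, ENNReal.ofReal (∫ v, ‖v - ∑ j, ⟪ψ j ω, v⟫ • ψ j ω‖ ^ 2 ∂ν)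
      ≤ ENNReal.ofReal (∫ v, ‖v - ∑ j ∈ Finset.range d, ⟪φ j, v⟫ • φ j‖ ^ 2 ∂ν)
        + (ENNReal.ofReal (4 * d) * hilbertSchmidtNormSq b (C - empiricalCov (u · ω)))
          ^ (1 / 2 : ℝ) := fun ω => by
    have hrange : ∀ v, ∑ j : Fin d, ⟪φ j, v⟫ • φ j = ∑ j ∈ Finset.range d, ⟪φ j, v⟫ • φ j :=
      fun v => Fin.sum_univ_eq_sum_range (fun j => ⟪φ j, v⟫ • φ j) d
    simpa [hrange, ENNReal.ofReal_mul] using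
      ofReal_integral_norm_sub_sum_inner_smul_sq_le b h2 hC (isSymmetric_empiricalCov _) hφd
        (hψ ω) (hopt ω _ hφd)
  have hmean :=
    lintegral_hilbertSchmidtNormSq_sub_empiricalCov_le b C hmom4 hC (by omega) hu hind hmap
  calc _ ≤ (∫ v, ‖v - ∑ j ∈ Finset.range d, ⟪φ j, v⟫ • φ j‖ ^ 2 ∂ν)
        + √(4 * d * ((∫ v, ‖v‖ ^ 4 ∂ν) / N)) :=
        integral_le_add_sqrt_of_ofReal_le_add_rpow
          (fun _ => integral_nonneg fun _ => by positivity)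
          (measurable_hilbertSchmidtNormSq_sub_empiricalCov b C hu).aemeasurable (by positivity)
          (by positivity) (integral_nonneg fun _ => by positivity) hpoint hmean
    _ = _ := by
        rw [add_comm]
        congr 2
        ring

/-- **PCA generalization bound**: let `ν` be a probability measure with finite
fourth moment on a separable real Hilbert space, with non-centered covariance `C`
having orthonormal eigenvectors `φ` (spanning a dense subspace) and decreasing
eigenvalues.  There is a constant `Q ≥ 0`, depending only on `ν`, such that for
every `d`, every sample size `N ≥ d`, and every i.i.d. sample `u 1, ..., u N ∼ ν`
with empirical PCA subspace `V_{d,N}(ω)` spanned by top-`d` orthonormal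
eigenvectors `ψ j ω` of the empirical covariance, the expected population
projection error of `V_{d,N}` satisfies
`E[R(V_{d,N})] ≤ √(Q d / N) + R(V_d)`,
where `V_d` is the span of the top `d` population eigenvectors. -/
theorem pca_generalization_bound
    {H : Type*} [NormedAddCommGroup H] [InnerProductSpace ℝ H] [CompleteSpace H]
    [TopologicalSpace.SeparableSpace H] [MeasurableSpace H] [BorelSpace H]
    (ν : Measure H) [IsProbabilityMeasure ν]
    (hmom4 : Integrable (fun u : H => ‖u‖ ^ 4) ν)
    (C : H →L[ℝ] H)
    (hC : ∀ v z : H, ⟪v, C z⟫ = ∫ u, ⟪v, u⟫ * ⟪z, u⟫ ∂ν)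
    (lam : ℕ → ℝ) (φ : ℕ → H) (hφ : Orthonormal ℝ φ)
    (heig : ∀ j, C (φ j) = lam j • φ j) (hdec : Antitone lam)
    (hspan : (Submodule.span ℝ (Set.range φ)).topologicalClosure = ⊤) :
    ∃ Q : ℝ, 0 ≤ Q ∧
      ∀ (d N : ℕ), 1 ≤ d → d ≤ N →
      ∀ (Ω : Type) (_ : MeasurableSpace Ω) (P : Measure Ω), IsProbabilityMeasure P →
      ∀ (u : Fin N → Ω → H), (∀ j, Measurable (u j)) →
        ProbabilityTheory.iIndepFun u P →
        (∀ j, P.map (u j) = ν) →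
      ∀ (ψ : Fin d → Ω → H) (mu : Fin d → Ω → ℝ),
        (∀ ω, Orthonormal ℝ (fun j => ψ j ω)) →
        (∀ ω j, ((N : ℝ)⁻¹ • ∑ k, rankOne (u k ω)) (ψ j ω) = mu j ω • ψ j ω) →
        (∀ ω (χ : Fin d → H), Orthonormal ℝ χ →
          (∑ j, ⟪((N : ℝ)⁻¹ • ∑ k, rankOne (u k ω)) (χ j), χ j⟫)
            ≤ ∑ j, ⟪((N : ℝ)⁻¹ • ∑ k, rankOne (u k ω)) (ψ j ω), ψ j ω⟫) →
        (∫ ω, ∫ v, ‖v - ∑ j : Fin d, ⟪ψ j ω, v⟫ • ψ j ω‖ ^ 2 ∂ν ∂P)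
          ≤ Real.sqrt (Q * d / N)
            + ∫ v, ‖v - ∑ j ∈ Finset.range d, ⟪φ j, v⟫ • φ j‖ ^ 2 ∂ν :=
  pca_generalization_bound_general ν hmom4 C hC φ hφ hspan
end

section
/- Let H be a separable Hilbert space, ν a probability measure on H with finite second moment, C_N the empirical covariance from N i.i.d. samples with eigenvalues λ_{1,N} ≥ ... ≥ λ_{N,N}, and C the population covariance with eigenvalues λ₁ ≥ λ₂ ≥ .... Then for any d ≤ N, E[∑_{j=d+1}^N λ_{j,N}] ≤ ∑_{j=d+1}^∞ λ_j. -/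
/-!
Fix a sample and let `T = C_N`. By Ky Fan's maximum principle the sum of the top `d` eigenvalues
of `T` is at least `∑_{i<d} ⟪φ i, T φ i⟫ = (1/N) ∑ₖ ∑_{i<d} ⟪φ i, u k⟫²`, while by Bessel its trace
is at most `(1/N) ∑ₖ ‖u k‖²`. Hence the empirical tail is bounded by the sample mean of the
residual `‖x‖² - ∑_{i<d} ⟪φ i, x⟫²`, whose expectation is `∫ ‖x‖² dν - ∑_{i<d} λᵢ`; by Parseval
in the eigenbasis `φ` this is the population tail.
-/

open MeasureTheory
open scoped RealInnerProductSpace BigOperators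

open Finset

theorem sum_mul_le_sum_filter_lt {N d : ℕ} {m c : Fin N → ℝ} (hm : Antitone m) (hm0 : ∀ j, 0 ≤ m j)
    (hc0 : ∀ j, 0 ≤ c j) (hc1 : ∀ j, c j ≤ 1) (hc : ∑ j, c j ≤ d) :
    ∑ j, m j * c j ≤ ∑ j ∈ univ.filter (fun j : Fin N => (j : ℕ) < d), m j := by
  rcases le_or_gt N d with hNd | hdN
  · rw [filter_true_of_mem fun j _ => j.isLt.trans_le hNd]
    exact sum_le_sum fun j _ => mul_le_of_le_one_right (hm0 j) (hc1 j)
  -- Compare with the threshold `t = m d`: each term obeys `m c ≤ [j < d] m + t (c - [j < d])`.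
  set t := m ⟨d, hdN⟩
  have hterm : ∀ j : Fin N, m j * c j ≤
      (if (j : ℕ) < d then m j else 0) + t * (c j - if (j : ℕ) < d then 1 else 0) := by
    intro j
    split_ifs with hj
    · have : t ≤ m j := hm (Fin.le_def.2 hj.le)
      nlinarith [mul_nonneg (sub_nonneg.2 this) (sub_nonneg.2 (hc1 j))]
    · have : m j ≤ t := hm (Fin.le_def.2 (not_lt.1 hj))
      nlinarith [mul_nonneg (sub_nonneg.2 this) (hc0 j)]
  have hcard : ∑ j : Fin N, (if (j : ℕ) < d then (1 : ℝ) else 0) = d := by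
    rw [← sum_filter, sum_const, nsmul_one, Fin.card_filter_val_lt, min_eq_right hdN.le]
  calc ∑ j, m j * c j
      ≤ ∑ j : Fin N, ((if (j : ℕ) < d then m j else 0) +
          t * (c j - if (j : ℕ) < d then 1 else 0)) := sum_le_sum fun j _ => hterm j
    _ = ∑ j ∈ univ.filter (fun j : Fin N => (j : ℕ) < d), m j + t * (∑ j, c j - d) := by
      rw [sum_add_distrib, ← mul_sum, sum_sub_distrib, hcard, sum_filter]
    _ ≤ ∑ j ∈ univ.filter (fun j : Fin N => (j : ℕ) < d), m j := by
      have : 0 ≤ t := hm0 _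
      nlinarith

section InnerProduct

variable {H : Type*} [NormedAddCommGroup H] [InnerProductSpace ℝ H]

theorem Orthonormal.sum_real_inner_sq_le {ι : Type*} {v : ι → H} (hv : Orthonormal ℝ v)
    (s : Finset ι) (x : H) : ∑ i ∈ s, ⟪v i, x⟫ ^ 2 ≤ ‖x‖ ^ 2 := by
  simpa only [Real.norm_eq_abs, sq_abs] using hv.sum_inner_products_le (s := s) (x := x)

theorem HilbertBasis.hasSum_real_inner_sq {ι : Type*} (b : HilbertBasis ι ℝ H) (x : H) :
    HasSum (fun i => ⟪b i, x⟫ ^ 2) (‖x‖ ^ 2) := by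
  simpa only [real_inner_comm x, ← sq, real_inner_self_eq_norm_sq] using
    b.hasSum_inner_mul_inner x x

theorem inner_sum_smul_rankOne_apply_self {ι : Type*} (s : Finset ι) (a : ι → ℝ) (w : ι → H)
    (v : H) : ⟪v, (∑ k ∈ s, a k • rankOne (w k)) v⟫ = ∑ k ∈ s, a k * ⟪w k, v⟫ ^ 2 := by
  simp only [_root_.sum_apply, smul_apply, rankOne,
    ContinuousLinearMap.smulRight_apply, innerSL_apply_apply, inner_sum, real_inner_smul_right]
  refine sum_congr rfl fun k _ => ?_
  rw [real_inner_comm v]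
  ring

theorem Orthonormal.inner_sum_smul_rankOne_apply_self {ι : Type*} [Fintype ι] [DecidableEq ι]
    {ψ : ι → H} (hψ : Orthonormal ℝ ψ) (m : ι → ℝ) (j : ι) :
    ⟪ψ j, (∑ k, m k • rankOne (ψ k)) (ψ j)⟫ = m j := by
  rw [_root_.inner_sum_smul_rankOne_apply_self, sum_eq_single j]
  · rw [real_inner_self_eq_norm_sq, hψ.1 j]
    ring
  · intro k _ hkj
    rw [hψ.2 hkj]
    ring
  · exact fun h => absurd (mem_univ j) h

theorem sum_inner_apply_le_sum_top_eigenvalues {N : ℕ} {m : Fin N → ℝ} {ψ : Fin N → H}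
    (hψ : Orthonormal ℝ ψ) (hm : Antitone m) (hm0 : ∀ j, 0 ≤ m j) {φ : ℕ → H}
    (hφ : Orthonormal ℝ φ) (d : ℕ) :
    ∑ i ∈ range d, ⟪φ i, (∑ j, m j • rankOne (ψ j)) (φ i)⟫
      ≤ ∑ j ∈ univ.filter (fun j : Fin N => (j : ℕ) < d), m j := by
  set c : Fin N → ℝ := fun j => ∑ i ∈ range d, ⟪φ i, ψ j⟫ ^ 2
  have hc1 : ∀ j, c j ≤ 1 := fun j => by
    simpa only [hψ.1 j, one_pow] using hφ.sum_real_inner_sq_le (range d) (ψ j)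
  have hc : ∑ j, c j ≤ d := by
    calc ∑ j, c j = ∑ i ∈ range d, ∑ j, ⟪ψ j, φ i⟫ ^ 2 := by
          simp only [c, real_inner_comm (φ _)]
          exact sum_comm
      _ ≤ ∑ i ∈ range d, (1 : ℝ) := sum_le_sum fun i _ => by
          simpa only [hφ.1 i, one_pow] using hψ.sum_real_inner_sq_le univ (φ i)
      _ = d := by simp
  calc ∑ i ∈ range d, ⟪φ i, (∑ j, m j • rankOne (ψ j)) (φ i)⟫
      = ∑ j, m j * c j := by
        simp only [inner_sum_smul_rankOne_apply_self, c, mul_sum, real_inner_comm (φ _)]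
        exact sum_comm
    _ ≤ _ := sum_mul_le_sum_filter_lt hm hm0 (fun j => sum_nonneg fun i _ => sq_nonneg _) hc1 hc

theorem sum_tail_le_mean_residual {N : ℕ} {w ψ : Fin N → H} {m : Fin N → ℝ}
    (hψ : Orthonormal ℝ ψ) (hm : Antitone m)
    (hdecomp : (N : ℝ)⁻¹ • ∑ k, rankOne (w k) = ∑ j, m j • rankOne (ψ j))
    {φ : ℕ → H} (hφ : Orthonormal ℝ φ) (d : ℕ) :
    ∑ j ∈ univ.filter (fun j : Fin N => d ≤ (j : ℕ)), m j
      ≤ (N : ℝ)⁻¹ * ∑ k, (‖w k‖ ^ 2 - ∑ i ∈ range d, ⟪φ i, w k⟫ ^ 2) := by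
  have hquad : ∀ v, ⟪v, (∑ j, m j • rankOne (ψ j)) v⟫ = (N : ℝ)⁻¹ * ∑ k, ⟪w k, v⟫ ^ 2 := by
    intro v
    rw [← hdecomp, smul_sum, inner_sum_smul_rankOne_apply_self, mul_sum]
  have hm_eq : ∀ j, m j = (N : ℝ)⁻¹ * ∑ k, ⟪w k, ψ j⟫ ^ 2 := fun j => by
    rw [← hquad, hψ.inner_sum_smul_rankOne_apply_self]
  have hm0 : ∀ j, 0 ≤ m j := fun j => by
    rw [hm_eq]
    positivity
  have htrace : ∑ j, m j ≤ (N : ℝ)⁻¹ * ∑ k, ‖w k‖ ^ 2 := by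
    calc ∑ j, m j = (N : ℝ)⁻¹ * ∑ k, ∑ j, ⟪ψ j, w k⟫ ^ 2 := by
          simp only [hm_eq, ← mul_sum, real_inner_comm (ψ _)]
          rw [sum_comm]
      _ ≤ (N : ℝ)⁻¹ * ∑ k, ‖w k‖ ^ 2 := by
          gcongr with k
          exact hψ.sum_real_inner_sq_le univ (w k)
  have htop : (N : ℝ)⁻¹ * ∑ k, ∑ i ∈ range d, ⟪φ i, w k⟫ ^ 2
      ≤ ∑ j ∈ univ.filter (fun j : Fin N => (j : ℕ) < d), m j := by
    calc (N : ℝ)⁻¹ * ∑ k, ∑ i ∈ range d, ⟪φ i, w k⟫ ^ 2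
        = ∑ i ∈ range d, ⟪φ i, (∑ j, m j • rankOne (ψ j)) (φ i)⟫ := by
          simp only [hquad, ← mul_sum, real_inner_comm (φ _)]
          rw [sum_comm]
      _ ≤ _ := sum_inner_apply_le_sum_top_eigenvalues hψ hm hm0 hφ d
  have hsplit := sum_filter_add_sum_filter_not univ (fun j : Fin N => (j : ℕ) < d) m
  simp only [not_lt] at hsplit
  rw [sum_sub_distrib, mul_sub]
  linarith

variable [MeasurableSpace H] [OpensMeasurableSpace H] {ν : Measure H}

theorem integrable_inner_sq (hmom2 : Integrable (fun x : H => ‖x‖ ^ 2) ν) (v : H) :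
    Integrable (fun x => ⟪v, x⟫ ^ 2) ν := by
  refine (hmom2.const_mul (‖v‖ ^ 2)).mono'
    ((continuous_const.inner continuous_id).pow 2).aestronglyMeasurable (ae_of_all _ fun x => ?_)
  rw [Real.norm_eq_abs, abs_pow, ← mul_pow]
  exact pow_le_pow_left₀ (abs_nonneg _) (abs_real_inner_le_norm v x) 2

theorem HilbertBasis.hasSum_integral_inner_sq (b : HilbertBasis ℕ ℝ H)
    (hmom2 : Integrable (fun x : H => ‖x‖ ^ 2) ν) :
    HasSum (fun i => ∫ x, ⟪b i, x⟫ ^ 2 ∂ν) (∫ x, ‖x‖ ^ 2 ∂ν) := by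
  have hint : ∀ i, Integrable (fun x => ⟪b i, x⟫ ^ 2) ν := fun i => integrable_inner_sq hmom2 (b i)
  rw [hasSum_iff_tendsto_nat_of_nonneg (fun i => integral_nonneg fun x => sq_nonneg _)]
  simp_rw [← integral_finsetSum _ fun i _ => hint i]
  refine tendsto_integral_of_dominated_convergence (fun x => ‖x‖ ^ 2)
    (fun n => (integrable_finsetSum _ fun i _ => hint i).aestronglyMeasurable) hmom2
    (fun n => ae_of_all _ fun x => ?_)
    (ae_of_all _ fun x => (b.hasSum_real_inner_sq x).tendsto_sum_nat)
  rw [Real.norm_of_nonneg (sum_nonneg fun i _ => sq_nonneg _)]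
  exact b.orthonormal.sum_real_inner_sq_le _ x

theorem HilbertBasis.integral_residual_eq_tsum (b : HilbertBasis ℕ ℝ H)
    (hmom2 : Integrable (fun x : H => ‖x‖ ^ 2) ν) (d : ℕ) :
    ∫ x, (‖x‖ ^ 2 - ∑ i ∈ range d, ⟪b i, x⟫ ^ 2) ∂ν = ∑' j, ∫ x, ⟪b (j + d), x⟫ ^ 2 ∂ν := by
  have hint : ∀ i, Integrable (fun x => ⟪b i, x⟫ ^ 2) ν := fun i => integrable_inner_sq hmom2 (b i)
  rw [integral_sub hmom2 (integrable_finsetSum _ fun i _ => hint i),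
    integral_finsetSum _ fun i _ => hint i]
  exact ((hasSum_nat_add_iff' d).2 (b.hasSum_integral_inner_sq hmom2)).tsum_eq.symm

end InnerProduct

section SampleMean

variable {Ω α : Type*} [MeasurableSpace Ω] [MeasurableSpace α] {P : Measure Ω} {ν : Measure α}
  {N : ℕ} {u : Fin N → Ω → α} {h : α → ℝ}

theorem integrable_comp_of_map_eq (hu : ∀ k, AEMeasurable (u k) P)
    (hdist : ∀ k, P.map (u k) = ν) (hh : Integrable h ν) (k : Fin N) :
    Integrable (fun ω => h (u k ω)) P :=
  Integrable.comp_aemeasurable (by rwa [hdist k]) (hu k)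

theorem integrable_mean_comp (hu : ∀ k, AEMeasurable (u k) P)
    (hdist : ∀ k, P.map (u k) = ν) (hh : Integrable h ν) :
    Integrable (fun ω => (N : ℝ)⁻¹ * ∑ k, h (u k ω)) P :=
  (integrable_finsetSum _ fun k _ => integrable_comp_of_map_eq hu hdist hh k).const_mul _

theorem integral_mean_comp (hN : N ≠ 0) (hu : ∀ k, AEMeasurable (u k) P)
    (hdist : ∀ k, P.map (u k) = ν) (hh : Integrable h ν) :
    ∫ ω, (N : ℝ)⁻¹ * ∑ k, h (u k ω) ∂P = ∫ x, h x ∂ν := by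
  have hk : ∀ k, ∫ ω, h (u k ω) ∂P = ∫ x, h x ∂ν := fun k => by
    rw [← hdist k, integral_map (hu k) (by rw [hdist k]; exact hh.aestronglyMeasurable)]
  rw [integral_const_mul, integral_finsetSum _ fun k _ => integrable_comp_of_map_eq hu hdist hh k,
    sum_congr rfl fun k _ => hk k, sum_const, card_univ, Fintype.card_fin, nsmul_eq_mul,
    inv_mul_cancel_left₀ (Nat.cast_ne_zero.2 hN)]

end SampleMean

theorem expected_empirical_tail_le_population_tail_general
    {H : Type*} [NormedAddCommGroup H] [InnerProductSpace ℝ H] [CompleteSpace H]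
    [MeasurableSpace H] [BorelSpace H]
    (ν : Measure H)
    (hmom2 : Integrable (fun u : H => ‖u‖ ^ 2) ν)
    (C : H →L[ℝ] H)
    (hC : ∀ v z : H, ⟪v, C z⟫ = ∫ u, ⟪v, u⟫ * ⟪z, u⟫ ∂ν)
    (lam : ℕ → ℝ) (φ : ℕ → H) (hφ : Orthonormal ℝ φ)
    (heig : ∀ j, C (φ j) = lam j • φ j)
    (hspan : (Submodule.span ℝ (Set.range φ)).topologicalClosure = ⊤)
    {Ω : Type*} [MeasurableSpace Ω] (P : Measure Ω)
    (N : ℕ) (hN : 0 < N) (u : Fin N → Ω → H)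
    (hmeas : ∀ j, Measurable (u j))
    (hdist : ∀ j, P.map (u j) = ν)
    (ψ : Fin N → Ω → H) (mu : Fin N → Ω → ℝ)
    (hψon : ∀ ω, Orthonormal ℝ (fun j => ψ j ω))
    (hmudec : ∀ ω, Antitone (fun j => mu j ω))
    (hdecomp : ∀ ω,
      ((N : ℝ)⁻¹ • ∑ k, rankOne (u k ω)) = ∑ j, mu j ω • rankOne (ψ j ω))
    (d : ℕ) :
    (∫ ω, ∑ j ∈ Finset.univ.filter (fun j : Fin N => d ≤ (j : ℕ)), mu j ω ∂P)
      ≤ ∑' j : ℕ, lam (j + d) := by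
  have hlam : ∀ j, lam j = ∫ x, ⟪φ j, x⟫ ^ 2 ∂ν := fun j => by
    simp_rw [sq, ← hC, heig, real_inner_smul_right, real_inner_self_eq_norm_sq, hφ.1 j]
    ring
  set h : H → ℝ := fun x => ‖x‖ ^ 2 - ∑ i ∈ range d, ⟪φ i, x⟫ ^ 2
  have hh : Integrable h ν :=
    hmom2.sub (integrable_finsetSum _ fun i _ => integrable_inner_sq hmom2 (φ i))
  have hpop : ∫ x, h x ∂ν = ∑' j, lam (j + d) := by
    simpa only [HilbertBasis.coe_mk, hlam] using
      (HilbertBasis.mk hφ hspan.ge).integral_residual_eq_tsum hmom2 d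
  have hu : ∀ k, AEMeasurable (u k) P := fun k => (hmeas k).aemeasurable
  by_cases hint : Integrable (fun ω => ∑ j ∈ univ.filter (fun j : Fin N => d ≤ (j : ℕ)), mu j ω) P
  · calc _ ≤ ∫ ω, (N : ℝ)⁻¹ * ∑ k, h (u k ω) ∂P :=
          integral_mono hint (integrable_mean_comp hu hdist hh) fun ω =>
            sum_tail_le_mean_residual (hψon ω) (hmudec ω) (hdecomp ω) hφ d
      _ = ∑' j, lam (j + d) := (integral_mean_comp hN.ne' hu hdist hh).trans hpop
  · -- `mu` is not assumed measurable; a non-integrable tail has integral `0`.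
    rw [integral_undef hint]
    exact tsum_nonneg fun j => (hlam _).symm ▸ integral_nonneg fun x => sq_nonneg _

/-- The expected tail sum of the eigenvalues of the empirical covariance is bounded
by the tail sum of the eigenvalues of the population covariance: with
`C_N(ω) = (1/N)∑ₖ u k ω ⊗ u k ω` having spectral decomposition
`C_N(ω) = ∑ⱼ mu j ω • (ψ j ω ⊗ ψ j ω)` with decreasing eigenvalues `mu j ω`,
and `C` having decreasing eigenvalues `lam`, for any `d ≤ N` one has
`E[∑_{j=d+1}^N mu j] ≤ ∑_{j=d+1}^∞ lam j`. -/
theorem expected_empirical_tail_le_population_tail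
    {H : Type*} [NormedAddCommGroup H] [InnerProductSpace ℝ H] [CompleteSpace H]
    [TopologicalSpace.SeparableSpace H] [MeasurableSpace H] [BorelSpace H]
    (ν : Measure H) [IsProbabilityMeasure ν]
    (hmom2 : Integrable (fun u : H => ‖u‖ ^ 2) ν)
    (C : H →L[ℝ] H)
    (hC : ∀ v z : H, ⟪v, C z⟫ = ∫ u, ⟪v, u⟫ * ⟪z, u⟫ ∂ν)
    (lam : ℕ → ℝ) (φ : ℕ → H) (hφ : Orthonormal ℝ φ)
    (heig : ∀ j, C (φ j) = lam j • φ j) (hdec : Antitone lam)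
    (hspan : (Submodule.span ℝ (Set.range φ)).topologicalClosure = ⊤)
    {Ω : Type*} [MeasurableSpace Ω] (P : Measure Ω) [IsProbabilityMeasure P]
    (N : ℕ) (hN : 0 < N) (u : Fin N → Ω → H)
    (hmeas : ∀ j, Measurable (u j))
    (hindep : ProbabilityTheory.iIndepFun u P)
    (hdist : ∀ j, P.map (u j) = ν)
    (ψ : Fin N → Ω → H) (mu : Fin N → Ω → ℝ)
    (hψon : ∀ ω, Orthonormal ℝ (fun j => ψ j ω))
    (hmudec : ∀ ω, Antitone (fun j => mu j ω))
    (hdecomp : ∀ ω,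
      ((N : ℝ)⁻¹ • ∑ k, rankOne (u k ω)) = ∑ j, mu j ω • rankOne (ψ j ω))
    (d : ℕ) (hd : d ≤ N) :
    (∫ ω, ∑ j ∈ Finset.univ.filter (fun j : Fin N => d ≤ (j : ℕ)), mu j ω ∂P)
      ≤ ∑' j : ℕ, lam (j + d) :=
  expected_empirical_tail_le_population_tail_general ν hmom2 C hC lam φ hφ heig hspan P N hN u hmeas
    hdist ψ mu hψon hmudec hdecomp d
end

section
/- Let H be a separable Hilbert space, C : H → H compact, self-adjoint, non-negative with eigenvalues λ₁ ≥ λ₂ ≥ ... and orthonormal eigenvectors φ₁, φ₂, .... For any orthonormal family {u₁,...,u_d} in H, ∑_{j=1}^d (λ_j − ⟨C u_j, u_j⟩) ≥ ∑_{j=1}^d (λ_j − λ_d)(1 − ∑_{k=1}^d |⟨u_k, φ_j⟩|²) ≥ 0. -/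
/-!
Expanding in the eigenbasis, `⟪C v, v⟫ = ∑ᵢ λᵢ ⟪v, φᵢ⟫²` and `‖v‖² = ∑ᵢ ⟪v, φᵢ⟫²`, so for a unit
vector `⟪C v, v⟫ - λ_d = ∑ᵢ (λᵢ - λ_d) ⟪v, φᵢ⟫²`, whose terms with `i ≥ d` are `≤ 0` because the
eigenvalues decrease. Summing this bound over `v = u_j` and exchanging the two finite sums gives the
first inequality; the second is Bessel's inequality `∑ₖ ⟪u_k, φⱼ⟫² ≤ ‖φⱼ‖² = 1`.
-/

open scoped RealInnerProductSpace BigOperators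

open Finset

theorem Orthonormal.sum_sq_inner_le_norm_sq {κ H : Type*} [Fintype κ] [NormedAddCommGroup H]
    [InnerProductSpace ℝ H] {u : κ → H} (hu : Orthonormal ℝ u) (x : H) :
    ∑ k, ⟪u k, x⟫ ^ 2 ≤ ‖x‖ ^ 2 := by
  simpa only [Real.norm_eq_abs, sq_abs] using hu.sum_inner_products_le x (s := univ)

namespace HilbertBasis

variable {ι H : Type*} [NormedAddCommGroup H] [InnerProductSpace ℝ H]

theorem hasSum_sq_inner (b : HilbertBasis ι ℝ H) (v : H) :
    HasSum (fun i => ⟪v, b i⟫ ^ 2) (‖v‖ ^ 2) := by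
  simpa only [sq, real_inner_comm v, real_inner_self_eq_norm_mul_norm]
    using b.hasSum_inner_mul_inner v v

theorem hasSum_eigenvalue_mul_sq_inner (b : HilbertBasis ι ℝ H) {T : H →ₗ[ℝ] H}
    (hT : T.IsSymmetric) {lam : ι → ℝ} (heig : ∀ i, T (b i) = lam i • b i) (v : H) :
    HasSum (fun i => lam i * ⟪v, b i⟫ ^ 2) ⟪T v, v⟫ := by
  have hcoeff : ∀ i, ⟪T v, b i⟫ * ⟪b i, v⟫ = lam i * ⟪v, b i⟫ ^ 2 := fun i => by
    rw [hT, heig, real_inner_smul_right, real_inner_comm v]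
    ring
  simpa only [hcoeff] using b.hasSum_inner_mul_inner (T v) v

theorem inner_apply_self_le (b : HilbertBasis ℕ ℝ H) {T : H →ₗ[ℝ] H}
    (hT : T.IsSymmetric) {lam : ℕ → ℝ} (heig : ∀ i, T (b i) = lam i • b i) {n : ℕ} {μ : ℝ}
    (hμ : ∀ i, n ≤ i → lam i ≤ μ) (v : H) :
    ⟪T v, v⟫ ≤ μ * ‖v‖ ^ 2 + ∑ k ∈ range n, (lam k - μ) * ⟪v, b k⟫ ^ 2 := by
  have hsum : HasSum (fun i => (μ - lam i) * ⟪v, b i⟫ ^ 2) (μ * ‖v‖ ^ 2 - ⟪T v, v⟫) := by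
    simpa only [sub_mul] using
      ((b.hasSum_sq_inner v).mul_left μ).sub (b.hasSum_eigenvalue_mul_sq_inner hT heig v)
  have htail : ∀ i ∉ range n, 0 ≤ (μ - lam i) * ⟪v, b i⟫ ^ 2 := fun i hi =>
    mul_nonneg (sub_nonneg.2 (hμ i (by simpa using hi))) (sq_nonneg _)
  have := sum_le_hasSum (range n) htail hsum
  simp only [sub_mul, sum_sub_distrib] at this ⊢
  linarith

theorem sum_mul_one_sub_sum_sq_inner_le (b : HilbertBasis ℕ ℝ H) {T : H →ₗ[ℝ] H}
    (hT : T.IsSymmetric) {lam : ℕ → ℝ} (heig : ∀ i, T (b i) = lam i • b i) (hlam : Antitone lam)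
    {d : ℕ} {u : Fin d → H} (hu : Orthonormal ℝ u) :
    ∑ j ∈ range d, (lam j - lam (d - 1)) * (1 - ∑ k : Fin d, ⟪u k, b j⟫ ^ 2)
      ≤ ∑ j : Fin d, (lam j - ⟪T (u j), u j⟫) := by
  set μ := lam (d - 1)
  have hbound (j : Fin d) :
      ⟪T (u j), u j⟫ ≤ μ + ∑ k ∈ range d, (lam k - μ) * ⟪u j, b k⟫ ^ 2 := by
    simpa only [hu.1 j, one_pow, mul_one] using
      b.inner_apply_self_le hT heig (fun i hi => hlam (by omega)) (u j)
  calc ∑ j ∈ range d, (lam j - μ) * (1 - ∑ k : Fin d, ⟪u k, b j⟫ ^ 2)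
      = ∑ j : Fin d, (lam j - (μ + ∑ k ∈ range d, (lam k - μ) * ⟪u j, b k⟫ ^ 2)) := by
        simp only [mul_sub, mul_one, sum_sub_distrib, mul_sum, ← sub_sub]
        rw [sum_comm, Fin.sum_univ_eq_sum_range (fun j => lam j)]
        simp
    _ ≤ ∑ j : Fin d, (lam j - ⟪T (u j), u j⟫) := sum_le_sum fun j _ => by linarith [hbound j]

end HilbertBasis

theorem fan_key_inequality_general
    {H : Type*} [NormedAddCommGroup H] [InnerProductSpace ℝ H] [CompleteSpace H]
    (C : H →L[ℝ] H)
    (hCsa : IsSelfAdjoint C)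
    (lam : ℕ → ℝ) (φ : ℕ → H) (hφ : Orthonormal ℝ φ)
    (heig : ∀ j, C (φ j) = lam j • φ j) (hdec : Antitone lam)
    (hspan : (Submodule.span ℝ (Set.range φ)).topologicalClosure = ⊤)
    (d : ℕ) (u : Fin d → H) (hu : Orthonormal ℝ u) :
    (∑ j ∈ Finset.range d, (lam j - lam (d - 1)) *
        (1 - ∑ k : Fin d, ⟪u k, φ j⟫ ^ 2))
      ≤ ∑ j : Fin d, (lam j - ⟪C (u j), u j⟫) ∧
    0 ≤ ∑ j ∈ Finset.range d, (lam j - lam (d - 1)) *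
        (1 - ∑ k : Fin d, ⟪u k, φ j⟫ ^ 2) := by
  obtain ⟨b, rfl⟩ : ∃ b : HilbertBasis ℕ ℝ H, ⇑b = φ :=
    ⟨HilbertBasis.mk hφ hspan.ge, HilbertBasis.coe_mk hφ hspan.ge⟩
  refine ⟨b.sum_mul_one_sub_sum_sq_inner_le hCsa.isSymmetric heig hdec hu, ?_⟩
  refine sum_nonneg fun j hj => mul_nonneg ?_ ?_
  · exact sub_nonneg.2 (hdec (Nat.le_sub_one_of_lt (mem_range.1 hj)))
  · simpa only [sub_nonneg, hφ.1 j, one_pow] using hu.sum_sq_inner_le_norm_sq (b j)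

/-- Key inequality in the proof of Fan's theorem: for a compact, self-adjoint,
non-negative operator `C` with orthonormal eigenvectors `φ` (spanning a dense
subspace) and decreasing eigenvalues `lam 0 ≥ lam 1 ≥ ...`, and for any
orthonormal family `u 1, ..., u d` (`d ≥ 1`),
`∑_{j<d} (λⱼ − ⟪C uⱼ, uⱼ⟫) ≥ ∑_{j<d} (λⱼ − λ_d)(1 − ∑_{k<d} ⟪u_k, φⱼ⟫²) ≥ 0`. -/
theorem fan_key_inequality
    {H : Type*} [NormedAddCommGroup H] [InnerProductSpace ℝ H] [CompleteSpace H]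
    [TopologicalSpace.SeparableSpace H]
    (C : H →L[ℝ] H) (hCcompact : IsCompactOperator C)
    (hCsa : IsSelfAdjoint C) (hCnonneg : ∀ u : H, 0 ≤ ⟪C u, u⟫)
    (lam : ℕ → ℝ) (φ : ℕ → H) (hφ : Orthonormal ℝ φ)
    (heig : ∀ j, C (φ j) = lam j • φ j) (hdec : Antitone lam)
    (hspan : (Submodule.span ℝ (Set.range φ)).topologicalClosure = ⊤)
    (d : ℕ) (hd : 1 ≤ d) (u : Fin d → H) (hu : Orthonormal ℝ u) :
    (∑ j ∈ Finset.range d, (lam j - lam (d - 1)) *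
        (1 - ∑ k : Fin d, ⟪u k, φ j⟫ ^ 2))
      ≤ ∑ j : Fin d, (lam j - ⟪C (u j), u j⟫) ∧
    0 ≤ ∑ j ∈ Finset.range d, (lam j - lam (d - 1)) *
        (1 - ∑ k : Fin d, ⟪u k, φ j⟫ ^ 2) :=
  fan_key_inequality_general C hCsa lam φ hφ heig hdec hspan d u hu
end
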